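/- arXiv:2201.04380 — 2 statements merged into one kernel-verified Lean document; each statement's English description precedes it below -/
import Mathlib

section
/- Let (Y,d) be a four-point semimetric space belonging to the class UBPP. Then either all six pairwise distances between distinct points of Y are pairwise distinct, or the set D(Y) of nonzero distances has exactly five elements d¹ < d² < d³ < d⁴ < d⁵, exactly one of these values is attained by exactly two unordered pairs of distinct points while each of the other four values is attained by exactly one such pair, and the value attained twice is one of d³, d⁴, d⁵ (this is exactly the statement that the digraph Di_Y of (Y,d) is isomorphic to one of the four digraphs Di¹, Di², Di³, Di⁴). -/
open Set

universe u v

/-- A semimetric on `X`: a symmetric, nonnegative function vanishing exactly on the diagonal. -/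
def IsSemimetric {X : Type u} (d : X → X → ℝ) : Prop :=
  (∀ x y, 0 ≤ d x y) ∧ (∀ x y, d x y = d y x) ∧ (∀ x y, d x y = 0 ↔ x = y)

/-- A metric: a semimetric satisfying the triangle inequality. -/
def IsMetricD {X : Type u} (d : X → X → ℝ) : Prop :=
  IsSemimetric d ∧ ∀ x y z, d x y ≤ d x z + d z y

/-- An ultrametric: a semimetric satisfying the strong triangle inequality. -/
def IsUltrametricD {X : Type u} (d : X → X → ℝ) : Prop :=
  IsSemimetric d ∧ ∀ x y z, d x y ≤ max (d x z) (d z y)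

/-- `sDist d A B = inf {d a b : a ∈ A, b ∈ B}`. -/
noncomputable def sDist {X : Type u} (d : X → X → ℝ) (A B : Set X) : ℝ :=
  sInf {r | ∃ a ∈ A, ∃ b ∈ B, d a b = r}

/-- `pDist d x A = inf {d x a : a ∈ A}`. -/
noncomputable def pDist {X : Type u} (d : X → X → ℝ) (x : X) (A : Set X) : ℝ :=
  sInf {r | ∃ a ∈ A, d x a = r}

/-- `A` is proximinal: every point of `X` has a best approximation in `A`. -/
def Proximinal {X : Type u} (d : X → X → ℝ) (A : Set X) : Prop :=
  ∀ x : X, ∃ a ∈ A, d x a = pDist d x A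

/-- Strong rigidity: distinct pairs of distinct points have distinct distances. -/
def StronglyRigid {X : Type u} (d : X → X → ℝ) : Prop :=
  ∀ x y u v : X, x ≠ y → d x y = d u v → ({x, y} : Set X) = {u, v}

/-- Strong rigidity of the subspace `S`. -/
def StronglyRigidOn {X : Type u} (d : X → X → ℝ) (S : Set X) : Prop :=
  ∀ x ∈ S, ∀ y ∈ S, ∀ u ∈ S, ∀ v ∈ S, x ≠ y → d x y = d u v → ({x, y} : Set X) = {u, v}

/-- Weak rigidity: every three-point subspace is strongly rigid. -/
def WeaklyRigid {X : Type u} (d : X → X → ℝ) : Prop :=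
  ∀ S : Set X, S.encard = 3 → StronglyRigidOn d S

/-- The class UBPP: any two disjoint proximinal subsets admit at most one best proximity pair. -/
def UBPP {X : Type u} (d : X → X → ℝ) : Prop :=
  ∀ A B : Set X, Disjoint A B → Proximinal d A → Proximinal d B →
    ∀ a₁ ∈ A, ∀ b₁ ∈ B, ∀ a₂ ∈ A, ∀ b₂ ∈ B,
      d a₁ b₁ = sDist d A B → d a₂ b₂ = sDist d A B → a₁ = a₂ ∧ b₁ = b₂

/-- `D(X)`: the set of all nonzero distances. -/
def DistSet {X : Type u} (d : X → X → ℝ) : Set ℝ :=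
  {r | ∃ x y : X, x ≠ y ∧ d x y = r}

/-- The unordered pairs of distinct points whose distance is `r`. -/
def PairsAt {X : Type u} (d : X → X → ℝ) (r : ℝ) : Set (Set X) :=
  {s | ∃ x y : X, x ≠ y ∧ d x y = r ∧ s = {x, y}}

/-- All distances between distinct unordered pairs of distinct points are pairwise distinct. -/
def AllDistinct {X : Type u} (d : X → X → ℝ) : Prop :=
  ∀ x y u v : X, x ≠ y → u ≠ v → d x y = d u v → ({x, y} : Set X) = {u, v}

/-- A weak similarity of `(X,d)` and `(Y,ρ)`. -/
def WeakSimilarity {X : Type u} {Y : Type v} (d : X → X → ℝ) (ρ : Y → Y → ℝ)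
    (Φ : X → Y) : Prop :=
  Function.Bijective Φ ∧ ∃ ψ : ℝ → ℝ, Set.BijOn ψ (DistSet ρ) (DistSet d) ∧
    StrictMonoOn ψ (DistSet ρ) ∧ ∀ x y : X, x ≠ y → d x y = ψ (ρ (Φ x) (Φ y))

/-- The four-point semimetric space `(X*, ρ*)` of Example 3.4, with points
`a₁ = 0, a₂ = 1, b₁ = 2, b₂ = 3`. -/
noncomputable def rhoStar : Fin 4 → Fin 4 → ℝ := fun i j =>
  !![(0 : ℝ), 5, 3, 1; 5, 0, 2, 3; 3, 2, 0, 4; 1, 3, 4, 0] i j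

/-- The restriction of a semimetric to the subspace `Y`. -/
def restrictS {X : Type u} (d : X → X → ℝ) (Y : Set X) : ↥Y → ↥Y → ℝ :=
  fun a b => d a.1 b.1

/-- The condition that the digraph `Di_Y` of a four-point space is isomorphic to one of
`Di¹, Di², Di³, Di⁴`: either all six distances are pairwise distinct, or there are exactly
five distance values, exactly one of which is attained by exactly two unordered pairs,
each other value by exactly one pair, and the repeated value has at least two values below it. -/
def DiOK {X : Type u} (d : X → X → ℝ) : Prop :=
  AllDistinct d ∨
    ((DistSet d).ncard = 5 ∧ ∃ c ∈ DistSet d,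
      (PairsAt d c).ncard = 2 ∧
      (∀ r ∈ DistSet d, r ≠ c → (PairsAt d r).ncard = 1) ∧
      2 ≤ ({r ∈ DistSet d | r < c}).ncard)

section Helpers
variable {Y : Type u} (d : Y → Y → ℝ)

lemma prox_of_finite [Finite Y] (A : Set Y) (hA : A.Nonempty) : Proximinal d A := by
  intro x
  have hfin : {r | ∃ a ∈ A, d x a = r}.Finite :=
    (Set.finite_range (d x)).subset (by rintro r ⟨a, _, rfl⟩; exact ⟨a, rfl⟩)
  have hne : {r | ∃ a ∈ A, d x a = r}.Nonempty :=
    ⟨d x hA.choose, hA.choose, hA.choose_spec, rfl⟩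
  exact hne.csInf_mem hfin

lemma min_unique [Finite Y] (h : UBPP d) (A B : Set Y) (hAB : Disjoint A B)
    (a₁ b₁ a₂ b₂ : Y) (ha₁ : a₁ ∈ A) (hb₁ : b₁ ∈ B) (ha₂ : a₂ ∈ A) (hb₂ : b₂ ∈ B)
    (hmin : ∀ a ∈ A, ∀ b ∈ B, d a₁ b₁ ≤ d a b) (heq : d a₂ b₂ = d a₁ b₁) :
    a₁ = a₂ ∧ b₁ = b₂ := by
  have hfin : {r | ∃ a ∈ A, ∃ b ∈ B, d a b = r}.Finite :=
    (Set.finite_range (Function.uncurry d)).subset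
      (by rintro r ⟨a, _, b, _, rfl⟩; exact ⟨(a, b), rfl⟩)
  have hmem : d a₁ b₁ ∈ {r | ∃ a ∈ A, ∃ b ∈ B, d a b = r} := ⟨a₁, ha₁, b₁, hb₁, rfl⟩
  have hsd : d a₁ b₁ = sDist d A B :=
    le_antisymm
      (le_csInf ⟨_, hmem⟩ (by rintro r ⟨a, ha, b, hb, rfl⟩; exact hmin a ha b hb))
      (csInf_le hfin.bddBelow hmem)
  exact h A B hAB (prox_of_finite d A ⟨a₁, ha₁⟩) (prox_of_finite d B ⟨b₁, hb₁⟩)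
    a₁ ha₁ b₁ hb₁ a₂ ha₂ b₂ hb₂ hsd (heq.trans hsd)

lemma no_iso [Finite Y] (h : UBPP d) (x y z : Y) (hyx : y ≠ x) (hzx : z ≠ x)
    (hyz : y ≠ z) (he : d x y = d x z) : False := by
  have hdisj : Disjoint ({x} : Set Y) {y, z} := by
    rw [Set.disjoint_left]
    intro a ha hb
    rcases hb with hb | hb
    · exact hyx (hb ▸ ha ▸ rfl)
    · exact hzx (hb ▸ ha ▸ rfl)
  have k1 : d x y ≤ d x y := le_refl _
  have k2 : d x y ≤ d x z := le_of_eq he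
  have hmin : ∀ a ∈ ({x} : Set Y), ∀ b ∈ ({y, z} : Set Y), d x y ≤ d a b := by
    rintro a rfl b (rfl | rfl) <;> assumption
  have := min_unique d h {x} {y, z} hdisj x y x z rfl (Or.inl rfl) rfl (Or.inr rfl)
    hmin he.symm
  exact hyz this.2

lemma no_cross [Finite Y] (hsymm : ∀ a b, d a b = d b a) (h : UBPP d) (a b c e : Y)
    (hab : a ≠ b) (hac : a ≠ c) (heb : e ≠ b) (hec : e ≠ c) (hae : a ≠ e)
    (h1 : d a b = d c e) (h2 : d a c = d b e) : False := by
  have hdisj : Disjoint ({a, e} : Set Y) {b, c} := by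
    rw [Set.disjoint_left]
    intro z hz hz'
    rcases hz with hz | hz <;> rcases hz' with hz' | hz'
    · exact hab (hz ▸ hz' ▸ rfl)
    · exact hac (hz ▸ hz' ▸ rfl)
    · exact heb (hz ▸ hz' ▸ rfl)
    · exact hec (hz ▸ hz' ▸ rfl)
  have heb' : d e b = d a c := (hsymm e b).trans h2.symm
  have hec' : d e c = d a b := (hsymm e c).trans h1.symm
  rcases le_total (d a b) (d a c) with hle | hle
  · have k1 : d a b ≤ d a b := le_refl _
    have k2 : d a b ≤ d a c := hle
    have k3 : d a b ≤ d e b := heb' ▸ hle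
    have k4 : d a b ≤ d e c := le_of_eq hec'.symm
    have hmin : ∀ x ∈ ({a, e} : Set Y), ∀ y ∈ ({b, c} : Set Y), d a b ≤ d x y := by
      rintro x (rfl | rfl) y (rfl | rfl) <;> assumption
    have := min_unique d h {a, e} {b, c} hdisj a b e c (Or.inl rfl) (Or.inl rfl)
      (Or.inr rfl) (Or.inr rfl) hmin hec'
    exact hae this.1
  · have k1 : d a c ≤ d a b := hle
    have k2 : d a c ≤ d a c := le_refl _
    have k3 : d a c ≤ d e b := le_of_eq heb'.symm
    have k4 : d a c ≤ d e c := hec' ▸ hle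
    have hmin : ∀ x ∈ ({a, e} : Set Y), ∀ y ∈ ({b, c} : Set Y), d a c ≤ d x y := by
      rintro x (rfl | rfl) y (rfl | rfl) <;> assumption
    have := min_unique d h {a, e} {b, c} hdisj a c e b (Or.inl rfl) (Or.inr rfl)
      (Or.inr rfl) (Or.inl rfl) hmin heb'
    exact hae this.1

lemma four_distinct [Finite Y] (hsymm : ∀ a b, d a b = d b a) (h : UBPP d)
    (x y u v : Y) (hxy : x ≠ y) (huv : u ≠ v) (hval : d x y = d u v)
    (hne : ({x, y} : Set Y) ≠ {u, v}) : x ≠ u ∧ x ≠ v ∧ y ≠ u ∧ y ≠ v := by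
  refine ⟨?_, ?_, ?_, ?_⟩
  · rintro rfl
    have hyv : y ≠ v := by rintro rfl; exact hne rfl
    exact no_iso d h x y v hxy.symm huv.symm hyv hval
  · rintro rfl
    have hyu : y ≠ u := by rintro rfl; exact hne (Set.pair_comm x y)
    exact no_iso d h x y u hxy.symm huv hyu (hval.trans (hsymm u x))
  · rintro rfl
    have hxv : x ≠ v := by rintro rfl; exact hne (Set.pair_comm x y)
    exact no_iso d h y x v hxy huv.symm hxv ((hsymm y x).trans hval)
  · rintro rfl
    have hxu : x ≠ u := by rintro rfl; exact hne rfl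
    exact no_iso d h y x u hxy huv hxu ((hsymm y x).trans (hval.trans (hsymm u y)))
end Helpers

lemma pairs_at_single {Y : Type u} (d : Y → Y → ℝ) [Finite Y]
    (hsymm : ∀ x y, d x y = d y x) (h : UBPP d) (a b c e : Y)
    (hab : a ≠ b) (hac : a ≠ c) (hae : a ≠ e) (hbc : b ≠ c) (hbe : b ≠ e) (hce : c ≠ e)
    (hY : ∀ z : Y, z = a ∨ z = b ∨ z = c ∨ z = e)
    (hval : d a b = d c e) : PairsAt d (d a c) = {({a, c} : Set Y)} := by
  have N1 : ∀ t : ℝ, t = d a b → t ≠ d a c := by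
    rintro t rfl he
    exact no_iso d h a b c hab.symm hac.symm hbc he
  have N2 : ∀ t : ℝ, t = d a e → t ≠ d a c := by
    rintro t rfl he
    exact no_iso d h a e c hae.symm hac.symm (Ne.symm hce) he
  have N3 : ∀ t : ℝ, t = d b c → t ≠ d a c := by
    rintro t rfl he
    exact no_iso d h c b a hbc hac hab.symm ((hsymm c b).trans (he.trans (hsymm a c)))
  have N4 : ∀ t : ℝ, t = d b e → t ≠ d a c := by
    rintro t rfl he
    exact no_cross d hsymm h a b c e hab hac hbe.symm hce.symm hae hval he.symm
  ext S
  simp only [PairsAt, Set.mem_setOf_eq, Set.mem_singleton_iff]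
  constructor
  · rintro ⟨x, y, hxy, hv, rfl⟩
    rcases hY x with rfl | rfl | rfl | rfl <;> rcases hY y with rfl | rfl | rfl | rfl
    · exact absurd rfl hxy
    · exact (N1 _ rfl hv).elim
    · rfl
    · exact (N2 _ rfl hv).elim
    · exact (N1 _ rfl ((hsymm _ _).trans hv)).elim
    · exact absurd rfl hxy
    · exact (N3 _ rfl hv).elim
    · exact (N4 _ rfl hv).elim
    · exact Set.pair_comm _ _
    · exact (N3 _ rfl ((hsymm _ _).trans hv)).elim
    · exact absurd rfl hxy
    · exact (N1 _ rfl (hval.trans hv)).elim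
    · exact (N2 _ rfl ((hsymm _ _).trans hv)).elim
    · exact (N4 _ rfl ((hsymm _ _).trans hv)).elim
    · exact (N1 _ rfl (hval.trans ((hsymm _ _).trans hv))).elim
    · exact absurd rfl hxy
  · rintro rfl
    exact ⟨a, c, hac, rfl, rfl⟩



/-- In a four-point UBPP semimetric space, either all six pairwise distances
are distinct, or there are exactly five distance values, exactly one attained by exactly two
unordered pairs (the rest by exactly one), the repeated value having at least two values
below it (i.e. `Di_Y` is isomorphic to one of `Di¹, Di², Di³, Di⁴`). -/
theorem stmt_11 {Y : Type u} (d : Y → Y → ℝ) (hd : IsSemimetric d)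
    (hcard : Nat.card Y = 4) (h : UBPP d) :
    AllDistinct d ∨
      ((DistSet d).ncard = 5 ∧ ∃ c ∈ DistSet d,
        (PairsAt d c).ncard = 2 ∧
        (∀ r ∈ DistSet d, r ≠ c → (PairsAt d r).ncard = 1) ∧
        2 ≤ ({r ∈ DistSet d | r < c}).ncard) := by
  haveI hfin : Finite Y := Nat.finite_of_card_ne_zero (by omega)
  obtain ⟨-, hsymm, -⟩ := hd
  by_cases hAD : AllDistinct d
  · exact Or.inl hAD
  right
  unfold AllDistinct at hAD
  push_neg at hAD
  obtain ⟨p, q, r, s, hpq, hrs, hval, hne⟩ := hAD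
  obtain ⟨hpr, hps, hqr, hqs⟩ := four_distinct d hsymm h p q r s hpq hrs hval hne
  -- coverage
  have hcov : ({p, q, r, s} : Set Y) = Set.univ := by
    apply Set.eq_of_subset_of_ncard_le (Set.subset_univ _)
    rw [Set.ncard_univ, hcard,
      Set.ncard_insert_of_notMem (by simp [hpq, hpr, hps]),
      Set.ncard_insert_of_notMem (by simp [hqr, hqs]),
      Set.ncard_insert_of_notMem (by simp [hrs]), Set.ncard_singleton]
  have hY : ∀ z : Y, z = p ∨ z = q ∨ z = r ∨ z = s := by
    intro z
    have : z ∈ ({p, q, r, s} : Set Y) := hcov ▸ Set.mem_univ z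
    simpa using this
  -- reversed-orientation normal forms
  have e1 : d q p = d p q := hsymm q p
  have e2 : d r p = d p r := hsymm r p
  have e3 : d s p = d p s := hsymm s p
  have e4 : d r q = d q r := hsymm r q
  have e5 : d s q = d q s := hsymm s q
  have e6 : d s r = d r s := hsymm s r
  have e7 : d r s = d p q := hval.symm
  have e8 : d s r = d p q := e6.trans e7
  -- pairwise distinctness of the five values
  have hc1 : d p q ≠ d p r := fun he => no_iso d h p q r hpq.symm hpr.symm hqr he
  have hc2 : d p q ≠ d p s := fun he => no_iso d h p q s hpq.symm hps.symm hqs he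
  have hc3 : d p q ≠ d q r := fun he => no_iso d h q p r hpq hqr.symm hpr (e1 ▸ he)
  have hc4 : d p q ≠ d q s := fun he => no_iso d h q p s hpq hqs.symm hps (e1 ▸ he)
  have h12 : d p r ≠ d p s := fun he => no_iso d h p r s hpr.symm hps.symm hrs he
  have h13 : d p r ≠ d q r := fun he =>
    no_iso d h r p q hpr hqr hpq (e2 ▸ e4 ▸ he)
  have h14 : d p r ≠ d q s := fun he =>
    no_cross d hsymm h p q r s hpq hpr hqs.symm hrs.symm hps hval he
  have h23 : d p s ≠ d q r := fun he =>
    no_cross d hsymm h p q s r hpq hps hqr.symm hrs hpr (hval.trans e6.symm) he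
  have h24 : d p s ≠ d q s := fun he =>
    no_iso d h s p q hps hqs hpq (e3 ▸ e5 ▸ he)
  have h34 : d q r ≠ d q s := fun he => no_iso d h q r s hqr.symm hqs.symm hrs he
  -- DistSet description
  have hD : DistSet d = {d p q, d p r, d p s, d q r, d q s} := by
    ext t
    constructor
    · rintro ⟨x, y, hxy, rfl⟩
      simp only [Set.mem_insert_iff, Set.mem_singleton_iff]
      rcases hY x with rfl | rfl | rfl | rfl <;> rcases hY y with rfl | rfl | rfl | rfl <;>
        first
          | exact absurd rfl hxy
          | tauto
    · intro ht
      simp only [Set.mem_insert_iff, Set.mem_singleton_iff] at ht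
      rcases ht with rfl | rfl | rfl | rfl | rfl
      exacts [⟨p, q, hpq, rfl⟩, ⟨p, r, hpr, rfl⟩, ⟨p, s, hps, rfl⟩,
        ⟨q, r, hqr, rfl⟩, ⟨q, s, hqs, rfl⟩]
  have hD5 : (DistSet d).ncard = 5 := by
    rw [hD, Set.ncard_insert_of_notMem (by simp [hc1, hc2, hc3, hc4]),
      Set.ncard_insert_of_notMem (by simp [h12, h13, h14]),
      Set.ncard_insert_of_notMem (by simp [h23, h24]),
      Set.ncard_insert_of_notMem (by simp [h34]), Set.ncard_singleton]
  have hDfin : (DistSet d).Finite := by rw [hD]; exact Set.toFinite _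
  -- PairsAt at the repeated value
  have hPc : PairsAt d (d p q) = {({p, q} : Set Y), {r, s}} := by
    ext S
    constructor
    · rintro ⟨x, y, hxy, hv, rfl⟩
      by_cases hxpq : ({x, y} : Set Y) = {p, q}
      · exact Or.inl hxpq
      · obtain ⟨hxp, hxq, hyp, hyq⟩ := four_distinct d hsymm h x y p q hxy hpq hv hxpq
        right
        rcases hY x with rfl | rfl | rfl | rfl
        · exact absurd rfl hxp
        · exact absurd rfl hxq
        · rcases hY y with rfl | rfl | rfl | rfl
          · exact absurd rfl hyp.symm
          · exact absurd rfl hyq.symm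
          · exact absurd rfl hxy
          · rfl
        · rcases hY y with rfl | rfl | rfl | rfl
          · exact absurd rfl hyp.symm
          · exact absurd rfl hyq.symm
          · exact Set.pair_comm x y
          · exact absurd rfl hxy
    · rintro (rfl | rfl)
      · exact ⟨p, q, hpq, rfl, rfl⟩
      · exact ⟨r, s, hrs, e7, rfl⟩
  -- single pairs at the other values
  have hP1 : PairsAt d (d p r) = {({p, r} : Set Y)} :=
    pairs_at_single d hsymm h p q r s hpq hpr hps hqr hqs hrs hY hval
  have hP2 : PairsAt d (d p s) = {({p, s} : Set Y)} :=
    pairs_at_single d hsymm h p q s r hpq hps hpr hqs hqr hrs.symm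
      (fun z => by rcases hY z with h' | h' | h' | h' <;> tauto) (hval.trans e6.symm)
  have hP3 : PairsAt d (d q r) = {({q, r} : Set Y)} :=
    pairs_at_single d hsymm h q p r s hpq.symm hqr hqs hpr hps hrs
      (fun z => by rcases hY z with h' | h' | h' | h' <;> tauto) (e1.trans hval)
  have hP4 : PairsAt d (d q s) = {({q, s} : Set Y)} :=
    pairs_at_single d hsymm h q p s r hpq.symm hqs hqr hps hpr hrs.symm
      (fun z => by rcases hY z with h' | h' | h' | h' <;> tauto) (e1.trans (hval.trans e6.symm))
  -- two values below the repeated one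
  have split1 : d p s < d p q ∨ d q r < d p q := by
    by_contra hcon
    push_neg at hcon
    obtain ⟨hb2, hb3⟩ := hcon
    have k1 : d p q ≤ d p q := le_refl _
    have k2 : d p q ≤ d p s := hb2
    have k3 : d p q ≤ d r q := e4 ▸ hb3
    have k4 : d p q ≤ d r s := le_of_eq e7.symm
    have hdisj : Disjoint ({p, r} : Set Y) {q, s} := by
      rw [Set.disjoint_left]
      intro z hz hz'
      simp only [Set.mem_insert_iff, Set.mem_singleton_iff] at hz hz'
      rcases hz with rfl | rfl <;> rcases hz' with h' | h'
      · exact hpq h'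
      · exact hps h'
      · exact hqr h'.symm
      · exact hrs h'
    have hmin : ∀ a ∈ ({p, r} : Set Y), ∀ b ∈ ({q, s} : Set Y), d p q ≤ d a b := by
      rintro a (rfl | rfl) b (rfl | rfl) <;> assumption
    have := min_unique d h {p, r} {q, s} hdisj p q r s (Or.inl rfl) (Or.inl rfl)
      (Or.inr rfl) (Or.inr rfl) hmin e7
    exact hpr this.1
  have split2 : d p r < d p q ∨ d q s < d p q := by
    by_contra hcon
    push_neg at hcon
    obtain ⟨hb1, hb4⟩ := hcon
    have k1 : d p q ≤ d p q := le_refl _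
    have k2 : d p q ≤ d p r := hb1
    have k3 : d p q ≤ d s q := e5 ▸ hb4
    have k4 : d p q ≤ d s r := le_of_eq (e6.trans e7).symm
    have hdisj : Disjoint ({p, s} : Set Y) {q, r} := by
      rw [Set.disjoint_left]
      intro z hz hz'
      simp only [Set.mem_insert_iff, Set.mem_singleton_iff] at hz hz'
      rcases hz with rfl | rfl <;> rcases hz' with h' | h'
      · exact hpq h'
      · exact hpr h'
      · exact hqs h'.symm
      · exact hrs h'.symm
    have hmin : ∀ a ∈ ({p, s} : Set Y), ∀ b ∈ ({q, r} : Set Y), d p q ≤ d a b := by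
      rintro a (rfl | rfl) b (rfl | rfl) <;> assumption
    have := min_unique d h {p, s} {q, r} hdisj p q s r (Or.inl rfl) (Or.inl rfl)
      (Or.inr rfl) (Or.inr rfl) hmin (e6.trans e7)
    exact hps this.1
  have two_le : ∀ a b : ℝ, a ∈ DistSet d → b ∈ DistSet d → a ≠ b →
      a < d p q → b < d p q → 2 ≤ ({t ∈ DistSet d | t < d p q}).ncard := by
    intro a b ha hb hab ha' hb'
    have hfin' : ({t ∈ DistSet d | t < d p q}).Finite := hDfin.subset (Set.sep_subset _ _)
    have := (Set.one_lt_ncard hfin').mpr ⟨a, ⟨ha, ha'⟩, b, ⟨hb, hb'⟩, hab⟩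
    omega
  have hlow : 2 ≤ ({t ∈ DistSet d | t < d p q}).ncard := by
    rcases split1 with hA | hA <;> rcases split2 with hB | hB
    · exact two_le _ _ ⟨p, s, hps, rfl⟩ ⟨p, r, hpr, rfl⟩ h12.symm hA hB
    · exact two_le _ _ ⟨p, s, hps, rfl⟩ ⟨q, s, hqs, rfl⟩ h24 hA hB
    · exact two_le _ _ ⟨q, r, hqr, rfl⟩ ⟨p, r, hpr, rfl⟩ h13.symm hA hB
    · exact two_le _ _ ⟨q, r, hqr, rfl⟩ ⟨q, s, hqs, rfl⟩ h34 hA hB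
  refine ⟨hD5, d p q, ⟨p, q, hpq, rfl⟩, ?_, ?_, hlow⟩
  · rw [hPc]
    exact Set.ncard_pair hne
  · intro t ht htc
    rw [hD] at ht
    simp only [Set.mem_insert_iff, Set.mem_singleton_iff] at ht
    rcases ht with rfl | rfl | rfl | rfl | rfl
    · exact absurd rfl htc
    · rw [hP1]; exact Set.ncard_singleton _
    · rw [hP2]; exact Set.ncard_singleton _
    · rw [hP3]; exact Set.ncard_singleton _
    · rw [hP4]; exact Set.ncard_singleton _
end

section
/- Let (X,d) be a semimetric space. Then (X,d) belongs to the class UBPP if and only if the following three conditions hold simultaneously: (i) (X,d) is weakly rigid; (ii) for every four-point subset Y ⊆ X, either all six pairwise distances between distinct points of Y are pairwise distinct, or D(Y) has exactly five elements d¹ < d² < d³ < d⁴ < d⁵ with exactly one value attained by exactly two unordered pairs of distinct points and this repeated value being one of d³, d⁴, d⁵ (i.e., the digraph Di_Y is isomorphic to one of Di¹, Di², Di³, Di⁴); and (iii) no four-point subspace of (X,d) is weakly similar to the semimetric space (X*,ρ*). -/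
open Set

universe u v

section Aux
variable {X : Type u} {d : X → X → ℝ}

lemma smX.ne_of_dist (hd : IsSemimetric d) {x y : X} (h : x ≠ y) : d x y ≠ 0 :=
  fun h0 => h ((hd.2.2 x y).mp h0)

lemma smX.prox_singleton (a : X) : Proximinal d {a} := by
  intro x
  refine ⟨a, rfl, ?_⟩
  have h : {r | ∃ b ∈ ({a} : Set X), d x b = r} = {d x a} := by ext r; simp
  rw [pDist, h, csInf_singleton]

lemma smX.prox_pair (a b : X) : Proximinal d {a, b} := by
  intro x
  have h : {r | ∃ c ∈ ({a, b} : Set X), d x c = r} = {d x a, d x b} := by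
    ext r; aesop
  rcases le_total (d x a) (d x b) with hle | hle
  · exact ⟨a, by simp, by rw [pDist, h, csInf_pair]; exact (min_eq_left hle).symm⟩
  · exact ⟨b, by simp, by rw [pDist, h, csInf_pair]; exact (min_eq_right hle).symm⟩

lemma smX.sDist_le (hd : IsSemimetric d) {A B : Set X} {a b : X} (ha : a ∈ A) (hb : b ∈ B) :
    sDist d A B ≤ d a b :=
  csInf_le ⟨0, by rintro r ⟨a', _, b', _, rfl⟩; exact hd.1 a' b'⟩ ⟨a, ha, b, hb, rfl⟩

/-- UBPP kills equal distances from a common point. -/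
lemma smX.ubpp_triple (hU : UBPP d) {p q r : X}
    (hpq : p ≠ q) (hpr : p ≠ r) (hqr : q ≠ r) : d p q ≠ d p r := by
  intro h
  have hdisj : Disjoint ({p} : Set X) {q, r} := by
    rw [Set.disjoint_left]; rintro x rfl hx
    rcases hx with h' | h'
    · exact hpq h'
    · exact hpr h'
  have hs : d p q = sDist d {p} {q, r} := by
    apply le_antisymm
    · refine le_csInf ⟨d p q, p, rfl, q, by simp, rfl⟩ ?_
      rintro b ⟨x, rfl, y, hy, rfl⟩
      rcases hy with rfl | rfl
      · exact le_refl _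
      · exact le_of_eq h
    · exact csInf_le ⟨min (d p q) (d p r), by
        rintro r' ⟨x, rfl, y, hy, rfl⟩
        rcases hy with rfl | rfl
        · exact min_le_left _ _
        · exact min_le_right _ _⟩ ⟨p, rfl, q, by simp, rfl⟩
  have := hU {p} {q, r} hdisj (smX.prox_singleton p) (smX.prox_pair q r)
    p rfl q (by simp) p rfl r (by simp) hs.symm.symm (by rw [← h]; exact hs)
  exact hqr this.2

/-- UBPP split lemma (Lemma D). -/
lemma smX.ubpp_split (hd : IsSemimetric d) (hU : UBPP d) {a b c e : X}
    (hab : a ≠ b) (hac : a ≠ c) (hae : a ≠ e) (hbc : b ≠ c) (hbe : b ≠ e) (hce : c ≠ e)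
    (h : d a b = d c e) : d a e < d a b ∨ d c b < d a b := by
  by_contra hcon
  push_neg at hcon
  obtain ⟨h1, h2⟩ := hcon
  have hdisj : Disjoint ({a, c} : Set X) {b, e} := by
    rw [Set.disjoint_left]; rintro x (rfl | rfl) hx <;> rcases hx with h' | h'
    · exact hab h'
    · exact hae h'
    · exact hbc.symm h'
    · exact hce h'
  have hs : d a b = sDist d {a, c} {b, e} := by
    apply le_antisymm
    · refine le_csInf ⟨d a b, a, by simp, b, by simp, rfl⟩ ?_
      rintro r ⟨x, hx, y, hy, rfl⟩
      rcases hx with rfl | rfl <;> rcases hy with rfl | rfl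
      · exact le_refl _
      · exact h1
      · exact h2
      · exact le_of_eq h
    · exact smX.sDist_le hd (by simp) (by simp)
  have := hU {a, c} {b, e} hdisj (smX.prox_pair a c) (smX.prox_pair b e)
    a (by simp) b (by simp) c (by simp) e (by simp) hs.symm.symm (by rw [← h]; exact hs.symm.symm)
  exact hac this.1
end Aux

section Aux2
variable {X : Type u} {d : X → X → ℝ}

lemma smX.encard_eq_four {s : Set X} (h : s.encard = 4) :
    ∃ a b c e : X, a ≠ b ∧ a ≠ c ∧ a ≠ e ∧ b ≠ c ∧ b ≠ e ∧ c ≠ e ∧ s = {a, b, c, e} := by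
  obtain ⟨a, ha⟩ := Set.nonempty_of_encard_ne_zero (s := s) (by rw [h]; simp)
  have h3 : (s \ {a}).encard = 3 := by
    rw [Set.encard_diff_singleton_of_mem ha, h]; rfl
  obtain ⟨b, c, e, hbc, hbe, hce, hs⟩ := Set.encard_eq_three.mp h3
  have hb : b ∈ s \ {a} := by rw [hs]; simp
  have hc : c ∈ s \ {a} := by rw [hs]; simp
  have he : e ∈ s \ {a} := by rw [hs]; simp
  refine ⟨a, b, c, e, fun h' => hb.2 (by simp [h'.symm]), fun h' => hc.2 (by simp [h'.symm]),
    fun h' => he.2 (by simp [h'.symm]), hbc, hbe, hce, ?_⟩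
  rw [← hs, Set.insert_diff_singleton, Set.insert_eq_of_mem ha]

lemma smX.encard4 {a b c e : X} (hab : a ≠ b) (hac : a ≠ c) (hae : a ≠ e)
    (hbc : b ≠ c) (hbe : b ≠ e) (hce : c ≠ e) : ({a, b, c, e} : Set X).encard = 4 := by
  rw [Set.encard_insert_of_notMem (by simp [hab, hac, hae]),
    Set.encard_insert_of_notMem (by simp [hbc, hbe]), Set.encard_pair hce]
  rfl

lemma smX.encard3 {a b c : X} (hab : a ≠ b) (hac : a ≠ c) (hbc : b ≠ c) :
    ({a, b, c} : Set X).encard = 3 :=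
  Set.encard_eq_three.mpr ⟨a, b, c, hab, hac, hbc, rfl⟩

lemma smX.classify4 {a b c e : X} (z : ↥({a, b, c, e} : Set X)) :
    z = ⟨a, by simp⟩ ∨ z = ⟨b, by simp⟩ ∨ z = ⟨c, by simp⟩ ∨ z = ⟨e, by simp⟩ := by
  obtain ⟨z, hz⟩ := z
  simp only [Set.mem_insert_iff, Set.mem_singleton_iff] at hz
  rcases hz with rfl | rfl | rfl | rfl
  · exact Or.inl rfl
  · exact Or.inr (Or.inl rfl)
  · exact Or.inr (Or.inr (Or.inl rfl))
  · exact Or.inr (Or.inr (Or.inr rfl))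

/-- UBPP implies weak rigidity (in a strong, global form). -/
lemma smX.ubpp_wr (hd : IsSemimetric d) (hU : UBPP d) : WeaklyRigid d := by
  intro S hS x hx y hy u hu v hv hxy hduv
  have huv : u ≠ v := by
    rintro rfl
    rw [(hd.2.2 u u).mpr rfl] at hduv
    exact hxy ((hd.2.2 x y).mp hduv)
  by_cases h1 : x = u
  · subst h1
    by_cases h2 : y = v
    · subst h2; rfl
    · exact absurd hduv (smX.ubpp_triple hU hxy huv h2)
  by_cases h2 : x = v
  · subst h2
    by_cases h3 : y = u
    · subst h3; exact Set.pair_comm _ _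
    · exact absurd (hduv.trans (hd.2.1 u x)) (smX.ubpp_triple hU hxy huv.symm h3)
  by_cases h3 : y = u
  · subst h3
    exact absurd ((hd.2.1 x y) ▸ hduv) (smX.ubpp_triple hU (Ne.symm hxy) huv h2)
  by_cases h4 : y = v
  · subst h4
    exact absurd ((hd.2.1 x y) ▸ hduv.trans (hd.2.1 u y)) (smX.ubpp_triple hU (Ne.symm hxy) huv.symm h1)
  · exfalso
    have hsub : ({x, y, u, v} : Set X) ⊆ S := by
      rintro z (rfl | rfl | rfl | rfl) <;> assumption
    have h4card : ({x, y, u, v} : Set X).encard = 4 :=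
      smX.encard4 hxy h1 h2 h3 h4 huv
    have hle := Set.encard_le_encard hsub
    rw [h4card, hS] at hle
    exact absurd hle (by decide)

/-- From weak rigidity: equal distances from a common vertex force equal endpoints. -/
lemma smX.wr_triple (hd : IsSemimetric d) (hWR : WeaklyRigid d) {p q r : X}
    (hpq : p ≠ q) (hpr : p ≠ r) (hqr : q ≠ r) (h : d p q = d p r) : False := by
  have hS := smX.encard3 hpq hpr hqr
  have := hWR _ hS p (by simp) q (by simp) p (by simp) r (by simp) hpq h
  have hq : q ∈ ({p, r} : Set X) := this ▸ (by simp : q ∈ ({p, q} : Set X))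
  rcases hq with h' | h'
  · exact hpq h'.symm
  · exact hqr h'
end Aux2
section Aux3
variable {X : Type u} {Z : Type v} {d : X → X → ℝ}

lemma smX.pairsAt_eq_singleton {d' : Z → Z → ℝ} {r : ℝ} {u v : Z} (huv : u ≠ v)
    (h : d' u v = r)
    (huniq : ∀ x y : Z, x ≠ y → d' x y = r → ({x, y} : Set Z) = {u, v}) :
    PairsAt d' r = {({u, v} : Set Z)} := by
  ext s
  simp only [PairsAt, Set.mem_setOf_eq, Set.mem_singleton_iff]
  constructor
  · rintro ⟨x, y, hxy, hval, rfl⟩; exact huniq x y hxy hval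
  · rintro rfl; exact ⟨u, v, huv, h, rfl⟩

lemma smX.pairsAt_eq_pair {d' : Z → Z → ℝ} {r : ℝ} {u v p q : Z} (huv : u ≠ v) (hpq : p ≠ q)
    (h1 : d' u v = r) (h2 : d' p q = r)
    (huniq : ∀ x y : Z, x ≠ y → d' x y = r →
      ({x, y} : Set Z) = {u, v} ∨ ({x, y} : Set Z) = {p, q}) :
    PairsAt d' r = {({u, v} : Set Z), {p, q}} := by
  ext s
  simp only [PairsAt, Set.mem_setOf_eq, Set.mem_insert_iff, Set.mem_singleton_iff]
  constructor
  · rintro ⟨x, y, hxy, hval, rfl⟩; exact huniq x y hxy hval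
  · rintro (rfl | rfl)
    · exact ⟨u, v, huv, h1, rfl⟩
    · exact ⟨p, q, hpq, h2, rfl⟩

noncomputable def smX.psiFun (e1 e2 e3 e4 e5 : ℝ) : ℝ → ℝ := fun r =>
  if r = 1 then e1 else if r = 2 then e2 else if r = 3 then e3 else if r = 4 then e4 else e5

lemma smX.psi1 (e1 e2 e3 e4 e5 : ℝ) : smX.psiFun e1 e2 e3 e4 e5 1 = e1 := by norm_num [smX.psiFun]
lemma smX.psi2 (e1 e2 e3 e4 e5 : ℝ) : smX.psiFun e1 e2 e3 e4 e5 2 = e2 := by norm_num [smX.psiFun]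
lemma smX.psi3 (e1 e2 e3 e4 e5 : ℝ) : smX.psiFun e1 e2 e3 e4 e5 3 = e3 := by norm_num [smX.psiFun]
lemma smX.psi4 (e1 e2 e3 e4 e5 : ℝ) : smX.psiFun e1 e2 e3 e4 e5 4 = e4 := by norm_num [smX.psiFun]
lemma smX.psi5 (e1 e2 e3 e4 e5 : ℝ) : smX.psiFun e1 e2 e3 e4 e5 5 = e5 := by norm_num [smX.psiFun]

lemma smX.distSet_rhoStar : DistSet rhoStar = {1, 2, 3, 4, 5} := by
  ext r
  constructor
  · rintro ⟨i, j, hij, rfl⟩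
    fin_cases i <;> fin_cases j <;>
      first
        | exact absurd rfl hij
        | norm_num [rhoStar, Set.mem_insert_iff, Set.mem_singleton_iff]
  · rintro (rfl | rfl | rfl | rfl | rfl)
    · exact ⟨0, 3, by decide, by norm_num [rhoStar, Matrix.cons_val_zero, Matrix.cons_val_one, Matrix.cons_val_two, Matrix.cons_val_three]⟩
    · exact ⟨1, 2, by decide, by norm_num [rhoStar, Matrix.cons_val_zero, Matrix.cons_val_one, Matrix.cons_val_two, Matrix.cons_val_three]⟩
    · exact ⟨0, 2, by decide, by norm_num [rhoStar, Matrix.cons_val_zero, Matrix.cons_val_one, Matrix.cons_val_two, Matrix.cons_val_three]⟩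
    · exact ⟨2, 3, by decide, by norm_num [rhoStar, Matrix.cons_val_zero, Matrix.cons_val_one, Matrix.cons_val_two, Matrix.cons_val_three]⟩
    · exact ⟨0, 1, by decide, by norm_num [rhoStar, Matrix.cons_val_zero, Matrix.cons_val_one, Matrix.cons_val_two, Matrix.cons_val_three]⟩
end Aux3
section Aux4
variable {X : Type u} {d : X → X → ℝ}

open Classical in
noncomputable def smX.phiFun (q0 q1 q2 : X) (Y : Set X) : ↥Y → Fin 4 := fun z =>
  if z.1 = q0 then 0 else if z.1 = q1 then 1 else if z.1 = q2 then 2 else 3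

/-- Construct a weak similarity with `X*` from the bad four-point pattern. -/
lemma smX.core_sim (hd : IsSemimetric d) {q0 q1 q2 q3 : X}
    (h01 : q0 ≠ q1) (h02 : q0 ≠ q2) (h03 : q0 ≠ q3)
    (h12 : q1 ≠ q2) (h13 : q1 ≠ q3) (h23 : q2 ≠ q3)
    {e1 e2 e3 e4 e5 : ℝ}
    (o12 : e1 < e2) (o23 : e2 < e3) (o34 : e3 < e4) (o45 : e4 < e5)
    (v03 : d q0 q3 = e1) (v12 : d q1 q2 = e2) (v02 : d q0 q2 = e3) (v13 : d q1 q3 = e3)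
    (v23 : d q2 q3 = e4) (v01 : d q0 q1 = e5) :
    ∃ Φ : ↥({q0, q1, q2, q3} : Set X) → Fin 4,
      WeakSimilarity (restrictS d ({q0, q1, q2, q3} : Set X)) rhoStar Φ := by
  classical
  set Y : Set X := {q0, q1, q2, q3} with hYdef
  have m0 : q0 ∈ Y := by simp [hYdef]
  have m1 : q1 ∈ Y := by simp [hYdef]
  have m2 : q2 ∈ Y := by simp [hYdef]
  have m3 : q3 ∈ Y := by simp [hYdef]
  set Q0 : ↥Y := ⟨q0, m0⟩
  set Q1 : ↥Y := ⟨q1, m1⟩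
  set Q2 : ↥Y := ⟨q2, m2⟩
  set Q3 : ↥Y := ⟨q3, m3⟩
  set Φ := smX.phiFun q0 q1 q2 Y with hΦdef
  -- evaluation of Φ
  have f0 : Φ Q0 = 0 := by simp [hΦdef, smX.phiFun, Q0, Q1, Q2, Q3]
  have f1 : Φ Q1 = 1 := by simp [hΦdef, smX.phiFun, Q0, Q1, Q2, Q3, Ne.symm h01]
  have f2 : Φ Q2 = 2 := by simp [hΦdef, smX.phiFun, Q0, Q1, Q2, Q3, Ne.symm h02, Ne.symm h12]
  have f3 : Φ Q3 = 3 := by simp [hΦdef, smX.phiFun, Q0, Q1, Q2, Q3, Ne.symm h03, Ne.symm h13, Ne.symm h23]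
  have hclass : ∀ z : ↥Y, z = Q0 ∨ z = Q1 ∨ z = Q2 ∨ z = Q3 := fun z => smX.classify4 z
  -- reversed distances
  have v30 : d q3 q0 = e1 := (hd.2.1 q3 q0).trans v03
  have v21 : d q2 q1 = e2 := (hd.2.1 q2 q1).trans v12
  have v20 : d q2 q0 = e3 := (hd.2.1 q2 q0).trans v02
  have v31 : d q3 q1 = e3 := (hd.2.1 q3 q1).trans v13
  have v32 : d q3 q2 = e4 := (hd.2.1 q3 q2).trans v23
  have v10 : d q1 q0 = e5 := (hd.2.1 q1 q0).trans v01
  set ψ := smX.psiFun e1 e2 e3 e4 e5 with hψdef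
  have ne12 : e1 ≠ e2 := ne_of_lt o12
  have ne13 : e1 ≠ e3 := ne_of_lt (o12.trans o23)
  have ne14 : e1 ≠ e4 := ne_of_lt ((o12.trans o23).trans o34)
  have ne15 : e1 ≠ e5 := ne_of_lt (((o12.trans o23).trans o34).trans o45)
  have ne23 : e2 ≠ e3 := ne_of_lt o23
  have ne24 : e2 ≠ e4 := ne_of_lt (o23.trans o34)
  have ne25 : e2 ≠ e5 := ne_of_lt ((o23.trans o34).trans o45)
  have ne34 : e3 ≠ e4 := ne_of_lt o34
  have ne35 : e3 ≠ e5 := ne_of_lt (o34.trans o45)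
  have ne45 : e4 ≠ e5 := ne_of_lt o45
  -- DistSet of the restriction
  have hDY : DistSet (restrictS d Y) = {e1, e2, e3, e4, e5} := by
    ext r
    constructor
    · rintro ⟨x, y, hxy, rfl⟩
      rcases hclass x with rfl | rfl | rfl | rfl <;> rcases hclass y with rfl | rfl | rfl | rfl <;>
        first
          | exact absurd rfl hxy
          | simp [restrictS, Q0, Q1, Q2, Q3, v03, v12, v02, v13, v23, v01, v30, v21, v20, v31, v32, v10]
    · have hne : ∀ (i j : ↥Y), i.1 ≠ j.1 → (i ≠ j) := fun i j h hc => h (congrArg Subtype.val hc)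
      rintro (rfl | rfl | rfl | rfl | rfl)
      · exact ⟨Q0, Q3, hne _ _ h03, v03⟩
      · exact ⟨Q1, Q2, hne _ _ h12, v12⟩
      · exact ⟨Q0, Q2, hne _ _ h02, v02⟩
      · exact ⟨Q2, Q3, hne _ _ h23, v23⟩
      · exact ⟨Q0, Q1, hne _ _ h01, v01⟩
  refine ⟨Φ, ⟨?_, ?_⟩, ψ, ?_, ?_, ?_⟩
  · -- injective
    intro x y h
    rcases hclass x with rfl | rfl | rfl | rfl <;> rcases hclass y with rfl | rfl | rfl | rfl <;>
      first
        | rfl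
        | (simp only [f0, f1, f2, f3] at h; exact absurd h (by decide))
  · -- surjective
    intro i
    fin_cases i
    · exact ⟨Q0, f0⟩
    · exact ⟨Q1, f1⟩
    · exact ⟨Q2, f2⟩
    · exact ⟨Q3, f3⟩
  · -- BijOn
    rw [smX.distSet_rhoStar, hDY]
    refine ⟨?_, ?_, ?_⟩
    · rintro r (rfl | rfl | rfl | rfl | rfl) <;>
        simp [hψdef, smX.psi1, smX.psi2, smX.psi3, smX.psi4, smX.psi5]
    · rintro r (rfl | rfl | rfl | rfl | rfl) s (rfl | rfl | rfl | rfl | rfl) h <;>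
        first
          | rfl
          | (simp only [hψdef, smX.psi1, smX.psi2, smX.psi3, smX.psi4, smX.psi5] at h; tauto)
    · rintro r (rfl | rfl | rfl | rfl | rfl)
      · exact ⟨1, by simp, smX.psi1 _ _ _ _ _⟩
      · exact ⟨2, by simp, smX.psi2 _ _ _ _ _⟩
      · exact ⟨3, by simp, smX.psi3 _ _ _ _ _⟩
      · exact ⟨4, by simp, smX.psi4 _ _ _ _ _⟩
      · exact ⟨5, by simp, smX.psi5 _ _ _ _ _⟩
  · -- StrictMonoOn
    rw [smX.distSet_rhoStar]
    rintro r (rfl | rfl | rfl | rfl | rfl) s (rfl | rfl | rfl | rfl | rfl) hlt <;>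
      rw [hψdef] <;>
      simp only [smX.psi1, smX.psi2, smX.psi3, smX.psi4, smX.psi5] <;>
      first
        | linarith
        | (exfalso; norm_num at hlt)
  · -- the distance condition
    intro x y hxy
    rcases hclass x with rfl | rfl | rfl | rfl <;> rcases hclass y with rfl | rfl | rfl | rfl <;>
      first
        | exact absurd rfl hxy
        | (rw [show (restrictS d Y _ _ : ℝ) = _ from rfl]) <;> skip
    all_goals
      simp only [f0, f1, f2, f3]
    all_goals
      norm_num [restrictS, rhoStar, Q0, Q1, Q2, Q3, Matrix.cons_val_zero, Matrix.cons_val_one, Matrix.cons_val_two, Matrix.cons_val_three, hψdef, smX.psiFun,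
        v03, v12, v02, v13, v23, v01, v30, v21, v20, v31, v32, v10]

section Aux5
variable {X : Type u} {d : X → X → ℝ}

/-- DiOK for a four-point set with a single repeated (matching) distance. -/
lemma smX.diok_of_repeat (hd : IsSemimetric d) {a b c e : X}
    (hab : a ≠ b) (hac : a ≠ c) (hae : a ≠ e) (hbc : b ≠ c) (hbe : b ≠ e) (hce : c ≠ e)
    (h16 : d a b = d c e)
    (h12 : d a b ≠ d a c) (h13 : d a b ≠ d a e) (h14 : d a b ≠ d b c) (h15 : d a b ≠ d b e)
    (h23 : d a c ≠ d a e) (h24 : d a c ≠ d b c) (h25 : d a c ≠ d b e)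
    (h34 : d a e ≠ d b c) (h35 : d a e ≠ d b e)
    (h45 : d b c ≠ d b e)
    (hlow1 : d a e < d a b ∨ d b c < d a b)
    (hlow2 : d a c < d a b ∨ d b e < d a b) :
    DiOK (restrictS d ({a, b, c, e} : Set X)) := by
  classical
  set Y : Set X := {a, b, c, e} with hYdef
  set A : ↥Y := ⟨a, by simp [hYdef]⟩
  set B : ↥Y := ⟨b, by simp [hYdef]⟩
  set C : ↥Y := ⟨c, by simp [hYdef]⟩
  set E : ↥Y := ⟨e, by simp [hYdef]⟩
  have hclass : ∀ z : ↥Y, z = A ∨ z = B ∨ z = C ∨ z = E := fun z => smX.classify4 z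
  have hne : ∀ (i j : ↥Y), i.1 ≠ j.1 → (i ≠ j) := fun i j h hc => h (congrArg Subtype.val hc)
  have hAB : A ≠ B := hne _ _ hab
  have hAC : A ≠ C := hne _ _ hac
  have hAE : A ≠ E := hne _ _ hae
  have hBC : B ≠ C := hne _ _ hbc
  have hBE : B ≠ E := hne _ _ hbe
  have hCE : C ≠ E := hne _ _ hce
  have hba : d b a = d a b := hd.2.1 b a
  have hca : d c a = d a c := hd.2.1 c a
  have hea : d e a = d a e := hd.2.1 e a
  have hcb : d c b = d b c := hd.2.1 c b
  have heb : d e b = d b e := hd.2.1 e b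
  have hec : d e c = d c e := hd.2.1 e c
  have h21 := h12.symm; have h31 := h13.symm; have h41 := h14.symm; have h51 := h15.symm
  have h32 := h23.symm; have h42 := h24.symm; have h52 := h25.symm
  have h43 := h34.symm; have h53 := h35.symm
  have h54 := h45.symm
  -- the distance set
  have hDY : DistSet (restrictS d Y) = {d a b, d a c, d a e, d b c, d b e} := by
    ext r
    constructor
    · rintro ⟨x, y, hxy, rfl⟩
      rcases hclass x with rfl | rfl | rfl | rfl <;> rcases hclass y with rfl | rfl | rfl | rfl <;>
        first
          | exact absurd rfl hxy
          | simp [restrictS, A, B, C, E, hba, hca, hea, hcb, heb, hec, ← h16]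
    · rintro (rfl | rfl | rfl | rfl | rfl)
      · exact ⟨A, B, hAB, rfl⟩
      · exact ⟨A, C, hAC, rfl⟩
      · exact ⟨A, E, hAE, rfl⟩
      · exact ⟨B, C, hBC, rfl⟩
      · exact ⟨B, E, hBE, rfl⟩
  -- uniqueness facts
  have uniq1 : ∀ x y : ↥Y, x ≠ y → restrictS d Y x y = d a b →
      ({x, y} : Set ↥Y) = {A, B} ∨ ({x, y} : Set ↥Y) = {C, E} := by
    intro x y hxy hval
    rcases hclass x with rfl | rfl | rfl | rfl <;> rcases hclass y with rfl | rfl | rfl | rfl <;>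
      simp only [restrictS, A, B, C, E, hba, hca, hea, hcb, heb, hec, ← h16] at hval <;>
      first
        | exact absurd rfl hxy
        | exact Or.inl rfl
        | exact Or.inl (Set.pair_comm _ _)
        | exact Or.inr rfl
        | exact Or.inr (Set.pair_comm _ _)
        | tauto
  have uniq2 : ∀ x y : ↥Y, x ≠ y → restrictS d Y x y = d a c →
      ({x, y} : Set ↥Y) = {A, C} := by
    intro x y hxy hval
    rcases hclass x with rfl | rfl | rfl | rfl <;> rcases hclass y with rfl | rfl | rfl | rfl <;>
      simp only [restrictS, A, B, C, E, hba, hca, hea, hcb, heb, hec, ← h16] at hval <;>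
      first
        | exact absurd rfl hxy
        | rfl
        | exact Set.pair_comm _ _
        | tauto
  have uniq3 : ∀ x y : ↥Y, x ≠ y → restrictS d Y x y = d a e →
      ({x, y} : Set ↥Y) = {A, E} := by
    intro x y hxy hval
    rcases hclass x with rfl | rfl | rfl | rfl <;> rcases hclass y with rfl | rfl | rfl | rfl <;>
      simp only [restrictS, A, B, C, E, hba, hca, hea, hcb, heb, hec, ← h16] at hval <;>
      first
        | exact absurd rfl hxy
        | rfl
        | exact Set.pair_comm _ _
        | tauto
  have uniq4 : ∀ x y : ↥Y, x ≠ y → restrictS d Y x y = d b c →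
      ({x, y} : Set ↥Y) = {B, C} := by
    intro x y hxy hval
    rcases hclass x with rfl | rfl | rfl | rfl <;> rcases hclass y with rfl | rfl | rfl | rfl <;>
      simp only [restrictS, A, B, C, E, hba, hca, hea, hcb, heb, hec, ← h16] at hval <;>
      first
        | exact absurd rfl hxy
        | rfl
        | exact Set.pair_comm _ _
        | tauto
  have uniq5 : ∀ x y : ↥Y, x ≠ y → restrictS d Y x y = d b e →
      ({x, y} : Set ↥Y) = {B, E} := by
    intro x y hxy hval
    rcases hclass x with rfl | rfl | rfl | rfl <;> rcases hclass y with rfl | rfl | rfl | rfl <;>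
      simp only [restrictS, A, B, C, E, hba, hca, hea, hcb, heb, hec, ← h16] at hval <;>
      first
        | exact absurd rfl hxy
        | rfl
        | exact Set.pair_comm _ _
        | tauto
  right
  constructor
  · -- ncard = 5
    rw [hDY, Set.ncard_insert_of_notMem (by simp [h12, h13, h14, h15]),
      Set.ncard_insert_of_notMem (by simp [h23, h24, h25]),
      Set.ncard_insert_of_notMem (by simp [h34, h35]), Set.ncard_pair h45]
  refine ⟨d a b, by rw [hDY]; simp, ?_, ?_, ?_⟩
  · -- two pairs at the repeated value
    rw [smX.pairsAt_eq_pair hAB hCE (show restrictS d Y A B = d a b from rfl) (show restrictS d Y C E = d a b from h16.symm) uniq1]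
    apply Set.ncard_pair
    intro hcon
    have : A ∈ ({C, E} : Set ↥Y) := hcon ▸ (by simp : A ∈ ({A, B} : Set ↥Y))
    rcases this with h' | h'
    · exact hAC h'
    · exact hAE h'
  · -- all other values have a unique pair
    intro r hr hrne
    rw [hDY] at hr
    rcases hr with rfl | rfl | rfl | rfl | rfl
    · exact absurd rfl hrne
    · rw [smX.pairsAt_eq_singleton hAC (show restrictS d Y A C = d a c from rfl) uniq2]; exact Set.ncard_singleton _
    · rw [smX.pairsAt_eq_singleton hAE (show restrictS d Y A E = d a e from rfl) uniq3]; exact Set.ncard_singleton _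
    · rw [smX.pairsAt_eq_singleton hBC (show restrictS d Y B C = d b c from rfl) uniq4]; exact Set.ncard_singleton _
    · rw [smX.pairsAt_eq_singleton hBE (show restrictS d Y B E = d b e from rfl) uniq5]; exact Set.ncard_singleton _
  · -- at least two smaller values
    obtain ⟨s, hsmem, hslt, t, htmem, htlt, hst⟩ :
        ∃ s, s ∈ ({d a c, d a e, d b c, d b e} : Set ℝ) ∧ s < d a b ∧
        ∃ t, t ∈ ({d a c, d a e, d b c, d b e} : Set ℝ) ∧ t < d a b ∧ s ≠ t := by
      rcases hlow1 with h' | h' <;> rcases hlow2 with h'' | h''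
      · exact ⟨d a e, by simp, h', d a c, by simp, h'', h23.symm⟩
      · exact ⟨d a e, by simp, h', d b e, by simp, h'', h35⟩
      · exact ⟨d b c, by simp, h', d a c, by simp, h'', h24.symm⟩
      · exact ⟨d b c, by simp, h', d b e, by simp, h'', h45⟩
    have hsub : ({s, t} : Set ℝ) ⊆ {r ∈ DistSet (restrictS d Y) | r < d a b} := by
      rintro r (rfl | rfl)
      · exact ⟨by rw [hDY]; exact Set.mem_insert_of_mem _ hsmem, hslt⟩
      · exact ⟨by rw [hDY]; exact Set.mem_insert_of_mem _ htmem, htlt⟩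
    have hfin : ({r ∈ DistSet (restrictS d Y) | r < d a b}).Finite := by
      apply Set.Finite.subset (s := DistSet (restrictS d Y)) _ (Set.sep_subset _ _)
      rw [hDY]; exact Set.toFinite _
    calc (2 : ℕ) = ({s, t} : Set ℝ).ncard := (Set.ncard_pair hst).symm
      _ ≤ _ := Set.ncard_le_ncard hsub hfin
end Aux5

section Aux6
variable {X : Type u} {d : X → X → ℝ}

lemma smX.forward_xstar (hd : IsSemimetric d) (hU : UBPP d) (Y : Set X) :
    ¬ ∃ Φ : ↥Y → Fin 4, WeakSimilarity (restrictS d Y) rhoStar Φ := by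
  rintro ⟨Φ, hbij, ψ, hbijψ, hmono, hψ⟩
  set eΦ := Equiv.ofBijective Φ hbij with heΦ
  set P : Fin 4 → X := fun i => ((eΦ.symm i : ↥Y) : X) with hP
  have key : ∀ i j : Fin 4, i ≠ j → d (P i) (P j) = ψ (rhoStar i j) := by
    intro i j hij
    have hne : eΦ.symm i ≠ eΦ.symm j := fun h => hij (by simpa using congrArg eΦ h)
    have h' := hψ _ _ hne
    rw [show (Φ (eΦ.symm i)) = eΦ (eΦ.symm i) from rfl,
      show (Φ (eΦ.symm j)) = eΦ (eΦ.symm j) from rfl,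
      eΦ.apply_symm_apply, eΦ.apply_symm_apply] at h'
    exact h'
  have hPne : ∀ i j : Fin 4, i ≠ j → P i ≠ P j := by
    intro i j hij h
    exact hij (eΦ.symm.injective (Subtype.ext h))
  have mem3 : (3 : ℝ) ∈ DistSet rhoStar := by rw [smX.distSet_rhoStar]; simp
  have mem4 : (4 : ℝ) ∈ DistSet rhoStar := by rw [smX.distSet_rhoStar]; simp
  have mem5 : (5 : ℝ) ∈ DistSet rhoStar := by rw [smX.distSet_rhoStar]; simp
  have ψ34 : ψ 3 < ψ 4 := hmono mem3 mem4 (by norm_num)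
  have ψ35 : ψ 3 < ψ 5 := hmono mem3 mem5 (by norm_num)
  have v02 : d (P 0) (P 2) = ψ 3 := by
    rw [key 0 2 (by decide), show rhoStar 0 2 = 3 by norm_num [rhoStar, Matrix.cons_val_zero, Matrix.cons_val_one, Matrix.cons_val_two, Matrix.cons_val_three]]
  have v31 : d (P 3) (P 1) = ψ 3 := by
    rw [key 3 1 (by decide), show rhoStar 3 1 = 3 by norm_num [rhoStar, Matrix.cons_val_zero, Matrix.cons_val_one, Matrix.cons_val_two, Matrix.cons_val_three]]
  have v01 : d (P 0) (P 1) = ψ 5 := by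
    rw [key 0 1 (by decide), show rhoStar 0 1 = 5 by norm_num [rhoStar, Matrix.cons_val_zero, Matrix.cons_val_one, Matrix.cons_val_two, Matrix.cons_val_three]]
  have v32 : d (P 3) (P 2) = ψ 4 := by
    rw [key 3 2 (by decide), show rhoStar 3 2 = 4 by norm_num [rhoStar, Matrix.cons_val_zero, Matrix.cons_val_one, Matrix.cons_val_two, Matrix.cons_val_three]]
  have hsplit := smX.ubpp_split hd hU (hPne 0 2 (by decide)) (hPne 0 3 (by decide))
    (hPne 0 1 (by decide)) (hPne 2 3 (by decide)) (hPne 2 1 (by decide))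
    (hPne 3 1 (by decide)) (v02.trans v31.symm)
  rw [v01, v32, v02] at hsplit
  rcases hsplit with h' | h' <;> linarith
end Aux6

section Aux7
variable {X : Type u} {d : X → X → ℝ}

set_option maxHeartbeats 2000000 in
/-- All six distances distinct, from the 15 pairwise inequalities. -/
lemma smX.all_distinct_of (hd : IsSemimetric d) {a b c e : X}
    (hab : a ≠ b) (hac : a ≠ c) (hae : a ≠ e) (hbc : b ≠ c) (hbe : b ≠ e) (hce : c ≠ e)
    (h12 : d a b ≠ d a c) (h13 : d a b ≠ d a e) (h14 : d a b ≠ d b c) (h15 : d a b ≠ d b e)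
    (h16 : d a b ≠ d c e)
    (h23 : d a c ≠ d a e) (h24 : d a c ≠ d b c) (h25 : d a c ≠ d b e) (h26 : d a c ≠ d c e)
    (h34 : d a e ≠ d b c) (h35 : d a e ≠ d b e) (h36 : d a e ≠ d c e)
    (h45 : d b c ≠ d b e) (h46 : d b c ≠ d c e)
    (h56 : d b e ≠ d c e) :
    AllDistinct (restrictS d ({a, b, c, e} : Set X)) := by
  have hba : d b a = d a b := hd.2.1 b a
  have hca : d c a = d a c := hd.2.1 c a
  have hea : d e a = d a e := hd.2.1 e a
  have hcb : d c b = d b c := hd.2.1 c b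
  have heb : d e b = d b e := hd.2.1 e b
  have hec : d e c = d c e := hd.2.1 e c
  have h21 := h12.symm; have h31 := h13.symm; have h41 := h14.symm; have h51 := h15.symm
  have h61 := h16.symm
  have h32 := h23.symm; have h42 := h24.symm; have h52 := h25.symm; have h62 := h26.symm
  have h43 := h34.symm; have h53 := h35.symm; have h63 := h36.symm
  have h54 := h45.symm; have h64 := h46.symm
  have h65 := h56.symm
  intro x y u v hxy huv h
  rcases smX.classify4 x with rfl | rfl | rfl | rfl <;>
    rcases smX.classify4 y with rfl | rfl | rfl | rfl <;>
    rcases smX.classify4 u with rfl | rfl | rfl | rfl <;>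
    rcases smX.classify4 v with rfl | rfl | rfl | rfl <;>
    simp only [restrictS, hba, hca, hea, hcb, heb, hec] at h <;>
    first
      | exact absurd rfl hxy
      | exact absurd rfl huv
      | rfl
      | exact Set.pair_comm _ _
      | tauto
end Aux7

section Aux8
variable {X : Type u} {d : X → X → ℝ}

lemma smX.forward_di (hd : IsSemimetric d) (hU : UBPP d) (Y : Set X) (hY : Y.encard = 4) :
    DiOK (restrictS d Y) := by
  obtain ⟨a, b, c, e, hab, hac, hae, hbc, hbe, hce, rfl⟩ := smX.encard_eq_four hY
  have hcb : d c b = d b c := hd.2.1 c b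
  have heb : d e b = d b e := hd.2.1 e b
  have hec : d e c = d c e := hd.2.1 e c
  have tri : ∀ {p q r : X}, p ≠ q → p ≠ r → q ≠ r → d p q ≠ d p r :=
    fun h1 h2 h3 => smX.ubpp_triple hU h1 h2 h3
  have h12 : d a b ≠ d a c := tri hab hac hbc
  have h13 : d a b ≠ d a e := tri hab hae hbe
  have h23 : d a c ≠ d a e := tri hac hae hce
  have h14 : d a b ≠ d b c := by rw [hd.2.1 a b]; exact tri hab.symm hbc hac
  have h15 : d a b ≠ d b e := by rw [hd.2.1 a b]; exact tri hab.symm hbe hae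
  have h24 : d a c ≠ d b c := by rw [hd.2.1 a c, hd.2.1 b c]; exact tri hac.symm hbc.symm hab
  have h35 : d a e ≠ d b e := by rw [hd.2.1 a e, hd.2.1 b e]; exact tri hae.symm hbe.symm hab
  have h45 : d b c ≠ d b e := tri hbc hbe hce
  have h26 : d a c ≠ d c e := by rw [hd.2.1 a c]; exact tri hac.symm hce hae
  have h36 : d a e ≠ d c e := by rw [hd.2.1 a e, hd.2.1 c e]; exact tri hae.symm hce.symm hac
  have h46 : d b c ≠ d c e := by rw [hd.2.1 b c]; exact tri hbc.symm hce hbe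
  have h56 : d b e ≠ d c e := by rw [hd.2.1 b e, hd.2.1 c e]; exact tri hbe.symm hce.symm hbc
  by_cases h16 : d a b = d c e
  · by_cases h25 : d a c = d b e
    · exfalso
      have s2 := smX.ubpp_split hd hU hab hae hac hbe hbc hce.symm
        (show d a b = d e c from h16.trans hec.symm)
      have s4 := smX.ubpp_split hd hU hac hae hab hce hbc.symm hbe.symm
        (show d a c = d e b from h25.trans heb.symm)
      rw [heb, ← h25] at s2
      rw [hec, ← h16] at s4
      rcases s2 with s2 | s2 <;> rcases s4 with s4 | s4 <;> linarith
    by_cases h34 : d a e = d b c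
    · exfalso
      have s1 := smX.ubpp_split hd hU hab hac hae hbc hbe hce h16
      have s6 := smX.ubpp_split hd hU hae hac hab hce.symm hbe.symm hbc.symm
        (show d a e = d c b from h34.trans hcb.symm)
      rw [hcb, ← h34] at s1
      rw [← h16] at s6
      rcases s1 with s1 | s1 <;> rcases s6 with s6 | s6 <;> linarith
    · have hlow1 : d a e < d a b ∨ d b c < d a b := by
        have := smX.ubpp_split hd hU hab hac hae hbc hbe hce h16
        rwa [hcb] at this
      have hlow2 : d a c < d a b ∨ d b e < d a b := by
        have := smX.ubpp_split hd hU hab hae hac hbe hbc hce.symm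
          (show d a b = d e c from h16.trans hec.symm)
        rwa [heb] at this
      exact smX.diok_of_repeat hd hab hac hae hbc hbe hce h16 h12 h13 h14 h15 h23 h24 h25
        h34 h35 h45 hlow1 hlow2
  by_cases h25 : d a c = d b e
  · by_cases h34 : d a e = d b c
    · exfalso
      have s3 := smX.ubpp_split hd hU hac hab hae hbc.symm hce hbe h25
      have s5 := smX.ubpp_split hd hU hae hab hac hbe.symm hce.symm hbc h34
      rw [← h34] at s3
      rw [← h25] at s5
      rcases s3 with s3 | s3 <;> rcases s5 with s5 | s5 <;> linarith
    · have hYeq : ({a, b, c, e} : Set X) = {a, c, b, e} := by ext z; simp; tauto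
      rw [hYeq]
      have hlow1 : d a e < d a c ∨ d c b < d a c := by
        have := smX.ubpp_split hd hU hac hab hae hbc.symm hce hbe h25
        rwa [hcb]
      have hlow2 : d a b < d a c ∨ d c e < d a c := by
        have := smX.ubpp_split hd hU hac hae hab hce hbc.symm hbe.symm
          (show d a c = d e b from h25.trans heb.symm)
        rwa [← hec]
      refine smX.diok_of_repeat hd hac hab hae hbc.symm hce hbe h25
        h12.symm h23 (by rw [hcb]; exact h24) h26 h13 (by rw [hcb]; exact h14) h16
        (by rw [hcb]; exact h34) h36 (by rw [hcb]; exact h46) hlow1 hlow2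
  by_cases h34 : d a e = d b c
  · have hYeq : ({a, b, c, e} : Set X) = {a, e, b, c} := by ext z; simp; tauto
    rw [hYeq]
    have hlow1 : d a c < d a e ∨ d e b < d a e := by
      have := smX.ubpp_split hd hU hae hab hac hbe.symm hce.symm hbc h34
      rwa [heb]
    have hlow2 : d a b < d a e ∨ d e c < d a e := by
      have := smX.ubpp_split hd hU hae hac hab hce.symm hbe.symm hbc.symm
        (show d a e = d c b from h34.trans hcb.symm)
      rwa [hec]
    refine smX.diok_of_repeat hd hae hab hac hbe.symm hce.symm hbc h34
      h13.symm h23.symm (by rw [heb]; exact h35) (by rw [hec]; exact h36) h12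
      (by rw [heb]; exact h15) (by rw [hec]; exact h16) (by rw [heb]; exact h25)
      (by rw [hec]; exact h26) (by rw [heb, hec]; exact h56) hlow1 hlow2
  · left
    exact smX.all_distinct_of hd hab hac hae hbc hbe hce h12 h13 h14 h15 h16 h23 h24 h25 h26
      h34 h35 h36 h45 h46 h56
end Aux8

section Aux9
variable {X : Type u} {d : X → X → ℝ}

set_option maxHeartbeats 1000000 in
lemma smX.converse (hd : IsSemimetric d) (hWR : WeaklyRigid d)
    (hDi : ∀ Y : Set X, Y.encard = 4 → DiOK (restrictS d Y))
    (hXs : ∀ Y : Set X, Y.encard = 4 →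
      ¬ ∃ Φ : ↥Y → Fin 4, WeakSimilarity (restrictS d Y) rhoStar Φ) :
    UBPP d := by
  intro A B hdisj hA hB a₁ ha₁ b₁ hb₁ a₂ ha₂ b₂ hb₂ h₁ h₂
  have hnem : ∀ {x y : X}, x ∈ A → y ∈ B → x ≠ y := fun hx hy h =>
    (Set.disjoint_left.mp hdisj hx) (h ▸ hy)
  have hab11 : a₁ ≠ b₁ := hnem ha₁ hb₁
  have hab12 : a₁ ≠ b₂ := hnem ha₁ hb₂
  have hab21 : a₂ ≠ b₁ := hnem ha₂ hb₁
  have hab22 : a₂ ≠ b₂ := hnem ha₂ hb₂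
  have WR3 : ∀ p q r : X, p ≠ q → p ≠ r → q ≠ r → d p q = d p r → False := fun p q r g1 g2 g3 g =>
    smX.wr_triple hd hWR g1 g2 g3 g
  have hvv : d a₁ b₁ = d a₂ b₂ := h₁.trans h₂.symm
  by_cases hA12 : a₁ = a₂
  · subst hA12
    exact ⟨rfl, by_contra fun hB12 => WR3 a₁ b₁ b₂ hab11 hab12 hB12 hvv⟩
  by_cases hB12 : b₁ = b₂
  · subst hB12
    refine ⟨by_contra fun hA12' => WR3 b₁ a₁ a₂ (Ne.symm hab11) (Ne.symm hab21) hA12'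
      (by rw [hd.2.1 b₁ a₁, hd.2.1 b₁ a₂]; exact hvv), rfl⟩
  exfalso
  have hw1 : d a₁ b₁ < d a₁ b₂ :=
    lt_of_le_of_ne (by rw [h₁]; exact smX.sDist_le hd ha₁ hb₂)
      (fun h => WR3 a₁ b₁ b₂ hab11 hab12 hB12 h)
  have hw2 : d a₁ b₁ < d a₂ b₁ :=
    lt_of_le_of_ne (by rw [h₁]; exact smX.sDist_le hd ha₂ hb₁)
      (fun h => WR3 b₁ a₁ a₂ (Ne.symm hab11) (Ne.symm hab21) hA12
        (by rw [hd.2.1 b₁ a₁, hd.2.1 b₁ a₂]; exact h))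
  set Y : Set X := {a₁, a₂, b₁, b₂} with hYdef
  have hY4 : Y.encard = 4 := smX.encard4 hA12 hab11 hab12 hab21 hab22 hB12
  set A1 : ↥Y := ⟨a₁, by simp [hYdef]⟩
  set A2 : ↥Y := ⟨a₂, by simp [hYdef]⟩
  set B1 : ↥Y := ⟨b₁, by simp [hYdef]⟩
  set B2 : ↥Y := ⟨b₂, by simp [hYdef]⟩
  have hneS : ∀ (i j : ↥Y), i.1 ≠ j.1 → i ≠ j := fun i j h hc => h (congrArg Subtype.val hc)
  have pairne : ({A1, B1} : Set ↥Y) ≠ {A2, B2} := by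
    intro h
    have hm : A1 ∈ ({A2, B2} : Set ↥Y) := h ▸ (by simp : A1 ∈ ({A1, B1} : Set ↥Y))
    rcases hm with h' | h'
    · exact hA12 (congrArg Subtype.val h')
    · exact hab12 (congrArg Subtype.val h')
  have pairne' : ({A2, B2} : Set ↥Y) ≠ {A1, B1} := fun h => pairne h.symm
  have m11 : ({A1, B1} : Set ↥Y) ∈ PairsAt (restrictS d Y) (d a₁ b₁) :=
    ⟨A1, B1, hneS _ _ hab11, rfl, rfl⟩
  have m22 : ({A2, B2} : Set ↥Y) ∈ PairsAt (restrictS d Y) (d a₁ b₁) :=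
    ⟨A2, B2, hneS _ _ hab22, hvv.symm, rfl⟩
  rcases hDi Y hY4 with hAD | ⟨hn5, cv, hcv, hP2, hP1, hlow⟩
  · exact pairne (hAD A1 B1 A2 B2 (hneS _ _ hab11) (hneS _ _ hab22)
      (show restrictS d Y A1 B1 = restrictS d Y A2 B2 from hvv))
  have hvd : d a₁ b₁ ∈ DistSet (restrictS d Y) := ⟨A1, B1, hneS _ _ hab11, rfl⟩
  have hcveq : d a₁ b₁ = cv := by
    by_contra hne'
    obtain ⟨s, hs⟩ := Set.ncard_eq_one.mp (hP1 _ hvd hne')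
    rw [hs] at m11 m22
    exact pairne (m11.trans m22.symm)
  obtain ⟨s, t, hst, hPeq⟩ := Set.ncard_eq_two.mp (hcveq ▸ hP2)
  have hmem : ∀ p ∈ PairsAt (restrictS d Y) (d a₁ b₁),
      p = ({A1, B1} : Set ↥Y) ∨ p = {A2, B2} := by
    intro p hp
    rw [hPeq] at hp m11 m22
    rcases hp with rfl | rfl
    · rcases m11 with h11 | h11
      · exact Or.inl h11.symm
      · rcases m22 with h22 | h22
        · exact Or.inr h22.symm
        · exact absurd (h11.trans h22.symm) pairne
    · rcases m11 with h11 | h11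
      · rcases m22 with h22 | h22
        · exact absurd (h11.trans h22.symm) pairne
        · exact Or.inr h22.symm
      · exact Or.inl h11.symm
  have hx1 : d a₁ a₂ ≠ d a₁ b₁ := by
    intro h
    rcases hmem {A1, A2} ⟨A1, A2, hneS _ _ hA12, h, rfl⟩ with h' | h'
    · have : A2 ∈ ({A1, B1} : Set ↥Y) := h' ▸ (by simp : A2 ∈ ({A1, A2} : Set ↥Y))
      rcases this with h'' | h''
      · exact hA12 (congrArg Subtype.val h'').symm
      · exact hab21 (congrArg Subtype.val h'')
    · have : A1 ∈ ({A2, B2} : Set ↥Y) := h' ▸ (by simp : A1 ∈ ({A1, A2} : Set ↥Y))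
      rcases this with h'' | h''
      · exact hA12 (congrArg Subtype.val h'')
      · exact hab12 (congrArg Subtype.val h'')
  have hx2 : d b₁ b₂ ≠ d a₁ b₁ := by
    intro h
    rcases hmem {B1, B2} ⟨B1, B2, hneS _ _ hB12, h, rfl⟩ with h' | h'
    · have : B2 ∈ ({A1, B1} : Set ↥Y) := h' ▸ (by simp : B2 ∈ ({B1, B2} : Set ↥Y))
      rcases this with h'' | h''
      · exact hab12 (congrArg Subtype.val h'').symm
      · exact hB12 (congrArg Subtype.val h'').symm
    · have : B1 ∈ ({A2, B2} : Set ↥Y) := h' ▸ (by simp : B1 ∈ ({B1, B2} : Set ↥Y))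
      rcases this with h'' | h''
      · exact hab21 (congrArg Subtype.val h'').symm
      · exact hB12 (congrArg Subtype.val h'')
  have hw12 : d a₁ b₂ ≠ d a₂ b₁ := by
    intro h
    have hmemw : d a₁ b₂ ∈ DistSet (restrictS d Y) := ⟨A1, B2, hneS _ _ hab12, rfl⟩
    obtain ⟨s', hs'⟩ := Set.ncard_eq_one.mp (hP1 _ hmemw (by rw [← hcveq]; exact hw1.ne'))
    have p1 : ({A1, B2} : Set ↥Y) ∈ PairsAt (restrictS d Y) (d a₁ b₂) :=
      ⟨A1, B2, hneS _ _ hab12, rfl, rfl⟩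
    have p2 : ({A2, B1} : Set ↥Y) ∈ PairsAt (restrictS d Y) (d a₁ b₂) :=
      ⟨A2, B1, hneS _ _ hab21, h.symm, rfl⟩
    rw [hs'] at p1 p2
    have : A1 ∈ ({A2, B1} : Set ↥Y) := (p1.trans p2.symm) ▸ (by simp : A1 ∈ ({A1, B2} : Set ↥Y))
    rcases this with h'' | h''
    · exact hA12 (congrArg Subtype.val h'')
    · exact hab11 (congrArg Subtype.val h'')
  -- bound the small values
  have hra : d a₂ a₁ = d a₁ a₂ := hd.2.1 a₂ a₁
  have hrb : d b₂ b₁ = d b₁ b₂ := hd.2.1 b₂ b₁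
  have hr11 : d b₁ a₁ = d a₁ b₁ := hd.2.1 b₁ a₁
  have hr12 : d b₂ a₁ = d a₁ b₂ := hd.2.1 b₂ a₁
  have hr21 : d b₁ a₂ = d a₂ b₁ := hd.2.1 b₁ a₂
  have hr22 : d b₂ a₂ = d a₁ b₁ := (hd.2.1 b₂ a₂).trans hvv.symm
  have h22v : d a₂ b₂ = d a₁ b₁ := hvv.symm
  have hDsub : DistSet (restrictS d Y) ⊆ {d a₁ b₁, d a₁ b₂, d a₂ b₁, d a₁ a₂, d b₁ b₂} := by
    rintro r ⟨x, y, hxy, rfl⟩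
    rcases smX.classify4 x with rfl | rfl | rfl | rfl <;>
      rcases smX.classify4 y with rfl | rfl | rfl | rfl <;>
      first
        | exact absurd rfl hxy
        | simp [restrictS, hra, hrb, hr11, hr12, hr21, hr22, h22v]
  have hsubpair : {r ∈ DistSet (restrictS d Y) | r < d a₁ b₁} ⊆ {d a₁ a₂, d b₁ b₂} := by
    rintro r ⟨hr, hrlt⟩
    rcases hDsub hr with rfl | rfl | rfl | rfl | rfl
    · exact absurd hrlt (lt_irrefl _)
    · exact absurd hrlt (lt_asymm hw1)
    · exact absurd hrlt (lt_asymm hw2)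
    · simp
    · simp
  rw [← hcveq] at hlow
  have hfin2 : ({r ∈ DistSet (restrictS d Y) | r < d a₁ b₁}).Finite :=
    (Set.toFinite ({d a₁ a₂, d b₁ b₂} : Set ℝ)).subset hsubpair
  obtain ⟨s1, t1, hs1, ht1, hst1⟩ := (Set.one_lt_ncard_iff hfin2).mp (by omega)
  have hkey : d a₁ a₂ < d a₁ b₁ ∧ d b₁ b₂ < d a₁ b₁ ∧ d a₁ a₂ ≠ d b₁ b₂ := by
    rcases hsubpair hs1 with h1' | h1' <;> rcases hsubpair ht1 with h2' | h2' <;>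
      subst h1' <;> subst h2'
    · exact absurd rfl hst1
    · exact ⟨hs1.2, ht1.2, hst1⟩
    · exact ⟨ht1.2, hs1.2, hst1.symm⟩
    · exact absurd rfl hst1
  obtain ⟨hu1, hu2, hu12⟩ := hkey
  rcases lt_or_gt_of_ne hu12 with hu | hu <;> rcases lt_or_gt_of_ne hw12 with hw | hw
  · -- u1 < u2, w1 < w2 : (q0,q1,q2,q3) = (a₂,b₁,b₂,a₁)
    exact hXs {a₂, b₁, b₂, a₁}
      (smX.encard4 hab21 hab22 (Ne.symm hA12) hB12 hab11.symm hab12.symm)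
      (smX.core_sim hd hab21 hab22 (Ne.symm hA12) hB12 hab11.symm hab12.symm
        hu hu2 hw1 hw
        ((hd.2.1 a₂ a₁))
        rfl h22v (hd.2.1 b₁ a₁) (hd.2.1 b₂ a₁) rfl)
  · -- u1 < u2, w2 < w1 : (q0,q1,q2,q3) = (a₁,b₂,b₁,a₂)
    exact hXs {a₁, b₂, b₁, a₂}
      (smX.encard4 hab12 hab11 hA12 (Ne.symm hB12) hab22.symm hab21.symm)
      (smX.core_sim hd hab12 hab11 hA12 (Ne.symm hB12) hab22.symm hab21.symm
        hu hu2 hw2 hw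
        rfl hrb rfl hr22 hr21 rfl)
  · -- u2 < u1, w1 < w2 : (q0,q1,q2,q3) = (b₁,a₂,a₁,b₂)
    exact hXs {b₁, a₂, a₁, b₂}
      (smX.encard4 hab21.symm hab11.symm hB12 (Ne.symm hA12) hab22 hab12)
      (smX.core_sim hd hab21.symm hab11.symm hB12 (Ne.symm hA12) hab22 hab12
        hu hu1 hw1 hw
        rfl hra hr11 h22v rfl hr21)
  · -- u2 < u1, w2 < w1 : (q0,q1,q2,q3) = (b₂,a₁,a₂,b₁)
    exact hXs {b₂, a₁, a₂, b₁}
      (smX.encard4 hab12.symm hab22.symm (Ne.symm hB12) hA12 hab11 hab21)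
      (smX.core_sim hd hab12.symm hab22.symm (Ne.symm hB12) hA12 hab11 hab21
        hu hu1 hw2 hw
        hrb rfl hr22 rfl rfl hr12)
end Aux9
end Aux4

/-- A semimetric space belongs to UBPP iff it is weakly rigid, the digraph of
every four-point subspace is isomorphic to one of `Di¹, Di², Di³, Di⁴`, and no four-point
subspace is weakly similar to `(X*, ρ*)`. -/
theorem stmt_16 {X : Type u} [Nonempty X] (d : X → X → ℝ) (hd : IsSemimetric d) :
    UBPP d ↔
      (WeaklyRigid d ∧
        (∀ Y : Set X, Y.encard = 4 → DiOK (restrictS d Y)) ∧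
        (∀ Y : Set X, Y.encard = 4 →
          ¬ ∃ Φ : ↥Y → Fin 4, WeakSimilarity (restrictS d Y) rhoStar Φ)) := by
  constructor
  · intro hU
    exact ⟨smX.ubpp_wr hd hU, fun Y hY => smX.forward_di hd hU Y hY,
      fun Y _ => smX.forward_xstar hd hU Y⟩
  · rintro ⟨hWR, hDi, hXs⟩
    exact smX.converse hd hWR hDi hXs
end
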